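/- arXiv:2403.01819 — 5 statements merged into one kernel-verified Lean document; each statement's English description precedes it below -/
import Mathlib

section
/- Let A be an associative unital ring, let h be a central element of A, let m ≥ 1, and let l : Fin m → Fin m → A be elements satisfying the gl(m)_h commutation relations l_i^j l_k^s − l_k^s l_i^j = h(l_i^s δ_k^j − l_k^j δ_i^s) for all i, j, k, s. Define the m×m matrices Λ_i^j := l_i^j · I_m + h · E_{ij} in Mat_m(A), where E_{ij} is the matrix unit with 1 in position (i,j) and 0 elsewhere. Then the matrices Λ_i^j satisfy the same gl(m)_h relations: Λ_i^j Λ_k^s − Λ_k^s Λ_i^j = h(Λ_i^s δ_k^j − Λ_k^j δ_i^s) for all i, j, k, s. (Equivalently, the assignment l_i^j ↦ l_i^j I_m + h E_{ij} defines a representation of the algebra U(gl(m)_h) by m×m matrices over itself; this encodes the multiplicativity 𝔻(ab) = 𝔻(a)𝔻(b) of the matrix of shifted quantum partial derivatives.) -/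
/-!
Write `Λ i j = l i j • 1 + single i j h`. Both summands satisfy the `gl(m)_h` relations on
their own: the scalar part because `l` does, the matrix units because
`E_ij E_ks = δ_jk E_is`. Since `h` is central, every scalar matrix `l i j • 1` commutes with
every `single k s h`, so the cross terms of the commutator cancel and the relations pass to
the sum.
-/

open Matrix

section

variable {ι R S : Type*} [DecidableEq ι]

/-- The scalar `h` acts through `•`, so that this reads `h * _` in the ring itself and `h • _`
on matrices over it. -/
def IsGlRelations [Ring R] [SMul S R] (h : S) (x : ι → ι → R) : Prop :=
  ∀ i j k s, x i j * x k s - x k s * x i j =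
    h • ((if k = j then x i s else 0) - (if i = s then x k j else 0))

theorem Matrix.smul_one_mul_single [Fintype ι] [Ring R] (a b : R) (i j : ι) :
    (a • 1 : Matrix ι ι R) * single i j b = single i j (a * b) := by
  rw [smul_one_mul, smul_single, smul_eq_mul]

theorem Matrix.single_mul_smul_one [Fintype ι] [Ring R] (a b : R) (i j : ι) :
    single i j b * (a • 1 : Matrix ι ι R) = single i j (b * a) := by
  ext
  rw [smul_one_eq_diagonal, mul_diagonal]
  simp only [single_apply, ite_mul, zero_mul]

theorem Matrix.single_mul_single [Fintype ι] [Ring R] (a b : R) (i j k s : ι) :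
    single i j a * single k s b = if j = k then single i s (a * b) else 0 := by
  split_ifs with hjk
  · rw [hjk, single_mul_single_same]
  · exact single_mul_single_of_ne _ _ _ _ hjk _

theorem isGlRelations_single [Fintype ι] [Ring R] (h : R) :
    IsGlRelations h fun i j : ι ↦ single i j h := by
  intro i j k s
  simp only [single_mul_single, smul_sub, smul_ite, smul_single, smul_eq_mul, smul_zero]
  grind

theorem IsGlRelations.smul_one [Fintype ι] [Ring R] {h : R} {x : ι → ι → R}
    (hx : IsGlRelations h x) : IsGlRelations h fun i j ↦ (x i j • 1 : Matrix ι ι R) := by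
  intro i j k s
  simp only [smul_one_mul, smul_smul, ← sub_smul, hx i j k s, smul_eq_mul]
  rw [mul_smul, sub_smul, ite_smul, ite_smul, zero_smul]

theorem IsGlRelations.add_of_commute [Ring R] [DistribSMul S R] {h : S} {x y : ι → ι → R}
    (hx : IsGlRelations h x) (hy : IsGlRelations h y) (hxy : ∀ i j k s, Commute (x i j) (y k s)) :
    IsGlRelations h (x + y) := by
  intro i j k s
  calc (x + y) i j * (x + y) k s - (x + y) k s * (x + y) i j
      = (x i j * x k s - x k s * x i j) + (y i j * y k s - y k s * y i j) := by
        simp only [Pi.add_apply, add_mul, mul_add, (hxy i j k s).eq, (hxy k s i j).eq]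
        abel
    _ = _ := by
        rw [hx, hy, ← smul_add]
        simp only [Pi.add_apply]
        congr 1
        split_ifs <;> abel

theorem IsGlRelations.smul_one_add_single [Fintype ι] [Ring R] {h : R} (hh : ∀ a, Commute h a)
    {l : ι → ι → R} (hl : IsGlRelations h l) :
    IsGlRelations h fun i j ↦ (l i j • 1 : Matrix ι ι R) + single i j h :=
  hl.smul_one.add_of_commute (isGlRelations_single h) fun i j k s ↦ by
    rw [Commute, SemiconjBy, smul_one_mul_single, single_mul_smul_one, hh]

end

theorem glmh_matrix_representation_general
    {A : Type*} [Ring A] (h : A) (hcentral : ∀ a : A, h * a = a * h)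
    (m : ℕ) (l : Fin m → Fin m → A)
    (hrel : ∀ i j k s : Fin m,
      l i j * l k s - l k s * l i j =
        h * ((if k = j then l i s else 0) - (if i = s then l k j else 0)))
    (Λ : Fin m → Fin m → Matrix (Fin m) (Fin m) A)
    (hΛ : ∀ i j : Fin m,
      Λ i j = l i j • (1 : Matrix (Fin m) (Fin m) A) + Matrix.single i j h) :
    ∀ i j k s : Fin m,
      Λ i j * Λ k s - Λ k s * Λ i j =
        h • ((if k = j then Λ i s else 0) - (if i = s then Λ k j else 0)) := by
  obtain rfl : Λ = fun i j ↦ l i j • (1 : Matrix (Fin m) (Fin m) A) + single i j h :=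
    funext₂ hΛ
  exact IsGlRelations.smul_one_add_single hcentral hrel

/-- The assignment `l i j ↦ l i j • I + h • E i j` preserves the `gl(m)_h`
commutation relations: this encodes the multiplicativity `𝔻(ab) = 𝔻(a)𝔻(b)` of the
matrix of shifted quantum partial derivatives on `U(gl(m)_h)`. -/
theorem glmh_matrix_representation
    {A : Type*} [Ring A] (h : A) (hcentral : ∀ a : A, h * a = a * h)
    (m : ℕ) (hm : 1 ≤ m) (l : Fin m → Fin m → A)
    (hrel : ∀ i j k s : Fin m,
      l i j * l k s - l k s * l i j =
        h * ((if k = j then l i s else 0) - (if i = s then l k j else 0)))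
    (Λ : Fin m → Fin m → Matrix (Fin m) (Fin m) A)
    (hΛ : ∀ i j : Fin m,
      Λ i j = l i j • (1 : Matrix (Fin m) (Fin m) A) + Matrix.single i j h) :
    ∀ i j k s : Fin m,
      Λ i j * Λ k s - Λ k s * Λ i j =
        h • ((if k = j then Λ i s else 0) - (if i = s then Λ k j else 0)) :=
  glmh_matrix_representation_general h hcentral m l hrel Λ hΛ
end

section
/- Let A be an associative unital ℂ-algebra, h ∈ ℂ, and let x, y, z, t ∈ A satisfy the u(2)_h relations: xy − yx = hz, yz − zy = hx, zx − xz = hy, and t commutes with x, y, z. In Mat_4(A) define the constant matrices M_x = E_{12} − E_{21} − E_{34} + E_{43}, M_y = E_{13} + E_{24} − E_{31} − E_{42}, M_z = E_{14} − E_{23} + E_{32} − E_{41} (E_{ij} the 4×4 matrix units), and set X = x·I_4 + (h/2)M_x, Y = y·I_4 + (h/2)M_y, Z = z·I_4 + (h/2)M_z, T = (t + h/2)·I_4. Then these matrices satisfy the same u(2)_h relations: XY − YX = hZ, YZ − ZY = hX, ZX − XZ = hY, and T commutes with X, Y, Z. (This expresses that the matrix 𝔥̂ of quantum partial derivatives defines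 an algebra homomorphism U(u(2)_h) → Mat_4(U(u(2)_h)).) -/
open Matrix

/-!
`X, Y, Z` are the scalar matrices `x • 1, y • 1, z • 1` perturbed by `h / 2` times integer
matrices. Integer matrices commute with scalar matrices, so `[X, Y]` splits as
`[x, y] • 1 + (h / 2)² [Mx, My]`, and `[Mx, My] = 2 Mz` makes the second term `h • (h / 2) • Mz`.
`T` is a scalar matrix whose entry commutes with `x, y, z`, so it commutes with `X, Y, Z`.
-/

/- Over `ℤ`: the matrices of right multiplication by `-i, -j, -k` on the quaternions in the basis
`1, i, j, k`, hence they satisfy `[I, J] = 2 K` and its cyclic permutations. -/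
def quatI : Matrix (Fin 4) (Fin 4) ℤ := !![0, 1, 0, 0; -1, 0, 0, 0; 0, 0, 0, -1; 0, 0, 1, 0]

def quatJ : Matrix (Fin 4) (Fin 4) ℤ := !![0, 0, 1, 0; 0, 0, 0, 1; -1, 0, 0, 0; 0, -1, 0, 0]

def quatK : Matrix (Fin 4) (Fin 4) ℤ := !![0, 0, 0, 1; 0, 0, -1, 0; 0, 1, 0, 0; -1, 0, 0, 0]

lemma quatI_mul_quatJ_sub : quatI * quatJ - quatJ * quatI = 2 • quatK := by decide

lemma quatJ_mul_quatK_sub : quatJ * quatK - quatK * quatJ = 2 • quatI := by decide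

lemma quatK_mul_quatI_sub : quatK * quatI - quatI * quatK = 2 • quatJ := by decide

section MatrixRing

variable {A : Type*} [Ring A]

lemma map_intCast_quatI : quatI.map ((↑) : ℤ → A) =
    single 0 1 1 - single 1 0 1 - single 2 3 1 + single 3 2 1 := by
  ext i j; fin_cases i <;> fin_cases j <;> simp [quatI]

lemma map_intCast_quatJ : quatJ.map ((↑) : ℤ → A) =
    single 0 2 1 + single 1 3 1 - single 2 0 1 - single 3 1 1 := by
  ext i j; fin_cases i <;> fin_cases j <;> simp [quatJ]

lemma map_intCast_quatK : quatK.map ((↑) : ℤ → A) =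
    single 0 3 1 - single 1 2 1 + single 2 1 1 - single 3 0 1 := by
  ext i j; fin_cases i <;> fin_cases j <;> simp [quatK]

variable {n : Type*} [Fintype n] [DecidableEq n]

lemma map_intCast_mul_sub {M N K : Matrix n n ℤ} {k : ℕ} (h : M * N - N * M = k • K) :
    M.map ((↑) : ℤ → A) * N.map (↑) - N.map (↑) * M.map (↑) = k • K.map (↑) := by
  have := congrArg (Int.castRingHom A).mapMatrix h
  simpa only [map_sub, map_mul, map_nsmul, RingHom.mapMatrix_apply, Int.coe_castRingHom]
    using this

lemma commute_smul_one_map_intCast (a : A) (M : Matrix n n ℤ) :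
    Commute (a • (1 : Matrix n n A)) (M.map (↑)) := by
  rw [smul_one_eq_diagonal]
  exact scalar_commute_iff.2 (ext fun i j => (Int.cast_commute (M i j) a).eq.symm)

lemma Commute.smul_one_smul_one {a b : A} (hab : Commute a b) :
    Commute (a • (1 : Matrix n n A)) (b • 1) := by
  rw [smul_one_eq_diagonal, smul_one_eq_diagonal]
  exact hab.map (scalar n)

lemma smul_one_mul_sub (a b : A) :
    (a • (1 : Matrix n n A)) * (b • 1) - (b • 1) * (a • 1) = (a * b - b * a) • 1 := by
  simp only [smul_mul, one_mul, smul_smul, sub_smul]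

end MatrixRing

lemma commutator_add_add {R : Type*} [Ring R] {a b P Q : R} (haQ : Commute a Q)
    (hPb : Commute P b) :
    (a + P) * (b + Q) - (b + Q) * (a + P) = (a * b - b * a) + (P * Q - Q * P) := by
  simp only [add_mul, mul_add, haQ.eq, hPb.eq]
  abel

lemma commutator_add_half_smul {𝕜 R : Type*} [Field 𝕜] [NeZero (2 : 𝕜)] [Ring R] [Algebra 𝕜 R]
    (h : 𝕜) {a b w P Q W : R} (haQ : Commute a Q) (hPb : Commute P b)
    (hab : a * b - b * a = h • w) (hPQ : P * Q - Q * P = 2 • W) :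
    (a + (h / 2) • P) * (b + (h / 2) • Q) - (b + (h / 2) • Q) * (a + (h / 2) • P)
      = h • (w + (h / 2) • W) := by
  rw [commutator_add_add (haQ.smul_right _) (hPb.smul_left _), hab, smul_mul_smul_comm,
    smul_mul_smul_comm, ← smul_sub, hPQ, ← Nat.cast_smul_eq_nsmul 𝕜, Nat.cast_ofNat, smul_smul,
    smul_add, smul_smul]
  congr 2
  field_simp

/-- The matrix `𝔥̂` of quantum partial derivatives defines an algebra homomorphism
`U(u(2)_h) → Mat_4(U(u(2)_h))`: the matrices `X, Y, Z, T` built from the generators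
satisfy the same `u(2)_h` relations. -/
theorem u2h_matrix_representation
    {A : Type*} [Ring A] [Algebra ℂ A] (h : ℂ) (x y z t : A)
    (hxy : x * y - y * x = h • z)
    (hyz : y * z - z * y = h • x)
    (hzx : z * x - x * z = h • y)
    (htx : t * x = x * t) (hty : t * y = y * t) (htz : t * z = z * t)
    (Mx My Mz : Matrix (Fin 4) (Fin 4) A)
    (hMx : Mx = Matrix.single 0 1 (1 : A) - Matrix.single 1 0 (1 : A)
      - Matrix.single 2 3 (1 : A) + Matrix.single 3 2 (1 : A))
    (hMy : My = Matrix.single 0 2 (1 : A) + Matrix.single 1 3 (1 : A)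
      - Matrix.single 2 0 (1 : A) - Matrix.single 3 1 (1 : A))
    (hMz : Mz = Matrix.single 0 3 (1 : A) - Matrix.single 1 2 (1 : A)
      + Matrix.single 2 1 (1 : A) - Matrix.single 3 0 (1 : A))
    (X Y Z T : Matrix (Fin 4) (Fin 4) A)
    (hX : X = x • (1 : Matrix (Fin 4) (Fin 4) A) + (h / 2) • Mx)
    (hY : Y = y • (1 : Matrix (Fin 4) (Fin 4) A) + (h / 2) • My)
    (hZ : Z = z • (1 : Matrix (Fin 4) (Fin 4) A) + (h / 2) • Mz)
    (hT : T = (t + (h / 2) • (1 : A)) • (1 : Matrix (Fin 4) (Fin 4) A)) :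
    X * Y - Y * X = h • Z ∧ Y * Z - Z * Y = h • X ∧ Z * X - X * Z = h • Y ∧
      T * X = X * T ∧ T * Y = Y * T ∧ T * Z = Z * T := by
  rw [← map_intCast_quatI] at hMx
  rw [← map_intCast_quatJ] at hMy
  rw [← map_intCast_quatK] at hMz
  subst hMx hMy hMz hX hY hZ hT
  have bracket {a b w : A} {M N K : Matrix (Fin 4) (Fin 4) ℤ} (hab : a * b - b * a = h • w)
      (hMN : M * N - N * M = 2 • K) :
      (a • 1 + (h / 2) • M.map (↑)) * (b • 1 + (h / 2) • N.map (↑))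
        - (b • 1 + (h / 2) • N.map (↑)) * (a • 1 + (h / 2) • M.map (↑))
        = h • (w • (1 : Matrix (Fin 4) (Fin 4) A) + (h / 2) • K.map (↑)) :=
    commutator_add_half_smul h (commute_smul_one_map_intCast a N)
      (commute_smul_one_map_intCast b M).symm (by rw [smul_one_mul_sub, hab, smul_assoc])
      (map_intCast_mul_sub hMN)
  have commute_T {a : A} (M : Matrix (Fin 4) (Fin 4) ℤ) (ha : Commute t a) :
      Commute ((t + (h / 2) • (1 : A)) • (1 : Matrix (Fin 4) (Fin 4) A))
        (a • 1 + (h / 2) • M.map (↑)) :=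
    (ha.add_left ((Commute.one_left a).smul_left _)).smul_one_smul_one.add_right
      ((commute_smul_one_map_intCast _ M).smul_right _)
  exact ⟨bracket hxy quatI_mul_quatJ_sub, bracket hyz quatJ_mul_quatK_sub,
    bracket hzx quatK_mul_quatI_sub, commute_T quatI htx, commute_T quatJ hty,
    commute_T quatK htz⟩
end

section
/- Let A be an associative unital ring, h a central element, and let a, b, c, d ∈ A satisfy the gl(2)_h relations: ab − ba = hb, ac − ca = −hc, ad − da = 0, bc − cb = h(a − d), bd − db = hb, cd − dc = −hc. Then the 2×2 matrix L = [[a, b], [c, d]] over A satisfies the Cayley–Hamilton identity L² − (a + d + h)·L + (ad + hd − cb)·I₂ = 0 in Mat_2(A). -/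
/-! Expanding `L² − tL + s·1` entrywise, the off-diagonal entries are `bd − db − hb` and
`ca − ac − hc`, and the upper diagonal entry is `(bc − cb) − h(a − d) + (ad − da)`; these vanish
by the relations for `[b, d]`, `[a, c]`, `[b, c]` and `[a, d]`, while the lower diagonal entry
cancels identically. -/

namespace Matrix

theorem fin_two_sq_sub_smul_add_smul_one {A : Type*} [Ring A] (a b c d t s : A) :
    !![a, b; c, d] ^ 2 - t • !![a, b; c, d] + s • (1 : Matrix (Fin 2) (Fin 2) A) =
      !![a * a + b * c - t * a + s, a * b + b * d - t * b;
         c * a + d * c - t * c, c * b + d * d - t * d + s] := by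
  rw [sq, mul_fin_two, one_fin_two]
  ext i j
  fin_cases i <;> fin_cases j <;> simp

end Matrix

theorem gl2h_cayley_hamilton_general
    {A : Type*} [Ring A] (h : A)
    (a b c d : A)
    (hac : a * c - c * a = -(h * c))
    (had : a * d - d * a = 0)
    (hbc : b * c - c * b = h * (a - d))
    (hbd : b * d - d * b = h * b) :
    (!![a, b; c, d] : Matrix (Fin 2) (Fin 2) A) ^ 2
      - (a + d + h) • !![a, b; c, d]
      + (a * d + h * d - c * b) • (1 : Matrix (Fin 2) (Fin 2) A) = 0 := by
  rw [Matrix.fin_two_sq_sub_smul_add_smul_one]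
  have e₀₀ : a * a + b * c - (a + d + h) * a + (a * d + h * d - c * b) = 0 := by
    linear_combination (norm := noncomm_ring) hbc + had
  have e₀₁ : a * b + b * d - (a + d + h) * b = 0 := by
    linear_combination (norm := noncomm_ring) hbd
  have e₁₀ : c * a + d * c - (a + d + h) * c = 0 := by
    linear_combination (norm := noncomm_ring) -hac
  have e₁₁ : c * b + d * d - (a + d + h) * d + (a * d + h * d - c * b) = 0 := by
    noncomm_ring
  rw [e₀₀, e₀₁, e₁₀, e₁₁]
  exact (Matrix.eta_fin_two 0).symm

/-- The generating matrix `L = [[a,b],[c,d]]` of `U(gl(2)_h)` satisfies the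
Cayley–Hamilton identity `L² − (a+d+h)L + (ad+hd−cb)I = 0`. -/
theorem gl2h_cayley_hamilton
    {A : Type*} [Ring A] (h : A) (hcentral : ∀ u : A, h * u = u * h)
    (a b c d : A)
    (hab : a * b - b * a = h * b)
    (hac : a * c - c * a = -(h * c))
    (had : a * d - d * a = 0)
    (hbc : b * c - c * b = h * (a - d))
    (hbd : b * d - d * b = h * b)
    (hcd : c * d - d * c = -(h * c)) :
    (!![a, b; c, d] : Matrix (Fin 2) (Fin 2) A) ^ 2
      - (a + d + h) • !![a, b; c, d]
      + (a * d + h * d - c * b) • (1 : Matrix (Fin 2) (Fin 2) A) = 0 :=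
  gl2h_cayley_hamilton_general h a b c d hac had hbc hbd
end

section
/- Let A be an associative unital ℂ-algebra, h ∈ ℂ, and let x, y, z, t ∈ A satisfy the u(2)_h relations: xy − yx = hz, yz − zy = hx, zx − xz = hy, and t commutes with x, y, z. Then the 2×2 matrix L = [[t − iz, −ix − y], [−ix + y, t + iz]] over A satisfies the Cayley–Hamilton identity L² − (2t + h)·L + (t² + x² + y² + z² + h t)·I₂ = 0 in Mat_2(A). -/
open Complex

/-- The generating matrix `L = [[t−iz, −ix−y],[−ix+y, t+iz]]` of the compact form
`U(u(2)_h)` satisfies the Cayley–Hamilton identity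
`L² − (2t+h)L + (t²+x²+y²+z²+ht)I = 0`. -/
theorem u2h_cayley_hamilton
    {A : Type*} [Ring A] [Algebra ℂ A] (h : ℂ) (x y z t : A)
    (hxy : x * y - y * x = h • z)
    (hyz : y * z - z * y = h • x)
    (hzx : z * x - x * z = h • y)
    (htx : t * x = x * t) (hty : t * y = y * t) (htz : t * z = z * t) :
    (!![t - Complex.I • z, -(Complex.I • x) - y;
        -(Complex.I • x) + y, t + Complex.I • z] : Matrix (Fin 2) (Fin 2) A) ^ 2
      - (2 * t + h • (1 : A)) •
          !![t - Complex.I • z, -(Complex.I • x) - y;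
             -(Complex.I • x) + y, t + Complex.I • z]
      + (t ^ 2 + x ^ 2 + y ^ 2 + z ^ 2 + h • t) • (1 : Matrix (Fin 2) (Fin 2) A)
      = 0 := by
  ext i j
  fin_cases i <;> fin_cases j <;>
    simp [pow_two, Matrix.mul_apply, Fin.sum_univ_succ, Matrix.one_apply,
      Matrix.smul_apply] <;>
    simp only [mul_add, add_mul, mul_sub, sub_mul, neg_mul, mul_neg, smul_mul_assoc,
      mul_smul_comm, smul_smul, Complex.I_mul_I, neg_smul, one_smul, neg_neg,
      smul_add, smul_sub, mul_one, one_mul, smul_neg, two_mul]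
  · linear_combination (norm := module) Complex.I • htz - Complex.I • hxy
  · linear_combination (norm := module)
      Complex.I • htx + hty - hzx - Complex.I • hyz
  · linear_combination (norm := module)
      Complex.I • htx - hty + hzx - Complex.I • hyz
  · linear_combination (norm := module) Complex.I • hxy - Complex.I • htz
end

section
/- Let A be an associative unital ℂ-algebra, ħ ∈ ℂ, h = 2iħ, and let x, y, z ∈ A satisfy xy − yx = hz, yz − zy = hx, zx − xz = hy. Suppose r ∈ A is an invertible central element (commuting with x, y, z) with r² = x² + y² + z² + ħ²·1. In Mat_4(A), with M_x = E_{12} − E_{21} − E_{34} + E_{43}, M_y = E_{13} + E_{24} − E_{31} − E_{42}, M_z = E_{14} − E_{23} + E_{32} − E_{41}, define X = x·I₄ + iħ·M_x, Y = y·I₄ + iħ·M_y, Z = z·I₄ + iħ·M_z, N = x·M_x + y·M_y + z·M_z, and R = (r² + ħ²)r⁻¹·I₄ + iħ·r⁻¹·N. Then R commutes with X, Y, and Z, and R² = X² + Y² + Z² + ħ²·I₄. -/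
/-! The matrices `Mx, My, Mz` satisfy the quaternion relations and commute with the scalar
matrices, so with `e = iħ` (hence `ħ² = -e²`) everything is computed as in `A ⊗ ℍ`. The `su(2)`
relations make `N = x Mx + y My + z Mz` commute with `X, Y, Z`, and give
`N² = 2eN - (x² + y² + z²) = 2eN - (r² + e²)`. As `R = (r² - e²) r⁻¹ + e r⁻¹ N` and
`r, r⁻¹, e, N` commute pairwise, `R² = r² - 3e² + 2eN` is then a polynomial identity, while
`X² + Y² + Z² = r² - 2e² + 2eN`. -/

structure IsQuaternionBasis {A B : Type*} [Ring A] [Ring B] (φ : A →+* B) (i j k : B) :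
    Prop where
  i_mul_i : i * i = -1
  j_mul_j : j * j = -1
  k_mul_k : k * k = -1
  i_mul_j : i * j = k
  j_mul_k : j * k = i
  k_mul_i : k * i = j
  j_mul_i : j * i = -k
  k_mul_j : k * j = -i
  i_mul_k : i * k = -j
  commute_i : ∀ a, Commute (φ a) i
  commute_j : ∀ a, Commute (φ a) j
  commute_k : ∀ a, Commute (φ a) k

namespace IsQuaternionBasis

variable {A B : Type*} [Ring A] [Ring B] {φ : A →+* B} {i j k : B}

theorem rotate (h : IsQuaternionBasis φ i j k) : IsQuaternionBasis φ j k i :=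
  ⟨h.j_mul_j, h.k_mul_k, h.i_mul_i, h.j_mul_k, h.k_mul_i, h.i_mul_j, h.k_mul_j, h.i_mul_k,
    h.j_mul_i, h.commute_j, h.commute_k, h.commute_i⟩

end IsQuaternionBasis

section QuaternionBasis

variable {A B : Type*} [Ring A] [Ring B] {φ : A →+* B} {i j k : B}

def quatComb (φ : A →+* B) (i j k : B) (a b c d : A) : B :=
  φ a + φ b * i + φ c * j + φ d * k

theorem quatComb_mul (h : IsQuaternionBasis φ i j k) (a b c d a' b' c' d' : A) :
    quatComb φ i j k a b c d * quatComb φ i j k a' b' c' d' =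
      quatComb φ i j k (a * a' - b * b' - c * c' - d * d') (a * b' + b * a' + c * d' - d * c')
        (a * c' - b * d' + c * a' + d * b') (a * d' + b * c' - c * b' + d * a') := by
  have hi (a : A) (t : B) : i * (φ a * t) = φ a * (i * t) := by
    rw [← mul_assoc, ← (h.commute_i a).eq, mul_assoc]
  have hj (a : A) (t : B) : j * (φ a * t) = φ a * (j * t) := by
    rw [← mul_assoc, ← (h.commute_j a).eq, mul_assoc]
  have hk (a : A) (t : B) : k * (φ a * t) = φ a * (k * t) := by
    rw [← mul_assoc, ← (h.commute_k a).eq, mul_assoc]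
  simp only [quatComb, add_mul, mul_add, mul_assoc, hi, hj, hk, ← (h.commute_i _).eq,
    ← (h.commute_j _).eq, ← (h.commute_k _).eq, h.i_mul_i, h.j_mul_j, h.k_mul_k, h.i_mul_j,
    h.j_mul_k, h.k_mul_i, h.j_mul_i, h.k_mul_j, h.i_mul_k, map_add, map_sub, map_mul]
  noncomm_ring

def quatVec (φ : A →+* B) (i j k : B) (x y z : A) : B :=
  φ x * i + φ y * j + φ z * k

variable {e x y z : A}

theorem quatVec_eq_quatComb : quatVec φ i j k x y z = quatComb φ i j k 0 x y z := by
  simp [quatVec, quatComb]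

theorem quatVec_rotate : quatVec φ j k i y z x = quatVec φ i j k x y z :=
  (add_rotate _ _ _).symm

theorem commute_quatVec_add_mul_unit (h : IsQuaternionBasis φ i j k) (he : ∀ a, Commute e a)
    (hxy : x * y - y * x = 2 * e * z) (hzx : z * x - x * z = 2 * e * y) :
    Commute (quatVec φ i j k x y z) (φ x + φ e * i) := by
  have hX : φ x + φ e * i = quatComb φ i j k x e 0 0 := by simp [quatComb]
  rw [quatVec_eq_quatComb, hX, Commute, SemiconjBy, quatComb_mul h, quatComb_mul h]
  congr 1
  · linear_combination (norm := noncomm_ring) (he x).eq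
  · noncomm_ring
  · linear_combination (norm := noncomm_ring) -hxy - (he z).eq
  · linear_combination (norm := noncomm_ring) hzx + (he y).eq

theorem quatVec_sq (h : IsQuaternionBasis φ i j k) (hxy : x * y - y * x = 2 * e * z)
    (hyz : y * z - z * y = 2 * e * x) (hzx : z * x - x * z = 2 * e * y) :
    quatVec φ i j k x y z ^ 2 =
      2 * φ e * quatVec φ i j k x y z - φ (x ^ 2 + y ^ 2 + z ^ 2) := by
  calc quatVec φ i j k x y z ^ 2
      = quatComb φ i j k (-(x ^ 2 + y ^ 2 + z ^ 2)) (2 * e * x) (2 * e * y) (2 * e * z) := by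
        rw [quatVec_eq_quatComb, sq, quatComb_mul h]
        congr 1
        · noncomm_ring
        · linear_combination (norm := noncomm_ring) hyz
        · linear_combination (norm := noncomm_ring) hzx
        · linear_combination (norm := noncomm_ring) hxy
    _ = _ := by
        simp only [quatVec, quatComb, map_neg, map_add, map_mul, map_pow, map_ofNat]
        noncomm_ring

theorem sq_add_mul_unit {q : B} (hq : q * q = -1) (hφq : ∀ a, Commute (φ a) q) {a b : A}
    (hab : Commute a b) :
    (φ a + φ b * q) ^ 2 = φ (a ^ 2 - b ^ 2) + 2 * φ b * (φ a * q) := by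
  simp only [map_sub, map_pow]
  linear_combination (norm := noncomm_ring) φ b * (hφq a).eq.symm + φ b * (hφq b).eq.symm * q
    + φ b * φ b * hq + (hab.map φ).eq * q

theorem sum_sq_add_mul_units (h : IsQuaternionBasis φ i j k) (he : ∀ a, Commute e a) :
    (φ x + φ e * i) ^ 2 + (φ y + φ e * j) ^ 2 + (φ z + φ e * k) ^ 2 =
      2 * φ e * quatVec φ i j k x y z + φ (x ^ 2 + y ^ 2 + z ^ 2 - 3 * e ^ 2) := by
  rw [sq_add_mul_unit h.i_mul_i h.commute_i (he x).symm,
    sq_add_mul_unit h.j_mul_j h.commute_j (he y).symm,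
    sq_add_mul_unit h.k_mul_k h.commute_k (he z).symm]
  simp only [quatVec, map_sub, map_add, map_mul, map_pow, map_ofNat]
  noncomm_ring

theorem commute_map_quatVec (h : IsQuaternionBasis φ i j k) {t : A} (hx : Commute t x)
    (hy : Commute t y) (hz : Commute t z) :
    Commute (φ t) (quatVec φ i j k x y z) :=
  (((hx.map φ).mul_right (h.commute_i t)).add_right
    ((hy.map φ).mul_right (h.commute_j t))).add_right ((hz.map φ).mul_right (h.commute_k t))

theorem commute_add_mul_quatVec (h : IsQuaternionBasis φ i j k) (he : ∀ a, Commute e a)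
    (hxy : x * y - y * x = 2 * e * z) (hzx : z * x - x * z = 2 * e * y) {c d : A}
    (hc : Commute c x) (hd : Commute d x) :
    Commute (φ c + φ d * quatVec φ i j k x y z) (φ x + φ e * i) := by
  have hcomm {t : A} (ht : Commute t x) : Commute (φ t) (φ x + φ e * i) :=
    (ht.map φ).add_right (((he t).symm.map φ).mul_right (h.commute_i t))
  exact (hcomm hc).add_left ((hcomm hd).mul_left (commute_quatVec_add_mul_unit h he hxy hzx))

end QuaternionBasis

open scoped IsMulCommutative in
theorem quantum_radius_sq_of_commute {B : Type*} [Ring B] {ρ σ ε n : B} (hρσ : Commute ρ σ)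
    (hρε : Commute ρ ε) (hρn : Commute ρ n) (hσε : Commute σ ε) (hσn : Commute σ n)
    (hεn : Commute ε n) (hinv : ρ * σ = 1) (hn : n ^ 2 = 2 * ε * n - (ρ ^ 2 + ε ^ 2)) :
    ((ρ ^ 2 - ε ^ 2) * σ + ε * (σ * n)) ^ 2 = ρ ^ 2 - 3 * ε ^ 2 + 2 * ε * n := by
  let S := Subring.closure ({ρ, σ, ε, n} : Set B)
  have : IsMulCommutative S := Subring.isMulCommutative_closure <| by
    simp only [Set.mem_insert_iff, Set.mem_singleton_iff]
    rintro a (rfl | rfl | rfl | rfl) b (rfl | rfl | rfl | rfl) <;>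
      first | rfl | assumption | exact Commute.symm (by assumption)
  let ρ' : S := ⟨ρ, Subring.subset_closure (by simp)⟩
  let σ' : S := ⟨σ, Subring.subset_closure (by simp)⟩
  let ε' : S := ⟨ε, Subring.subset_closure (by simp)⟩
  let n' : S := ⟨n, Subring.subset_closure (by simp)⟩
  have hinv' : ρ' * σ' = 1 := Subtype.ext hinv
  have hn' : n' ^ 2 = 2 * ε' * n' - (ρ' ^ 2 + ε' ^ 2) := Subtype.ext hn
  have key : ((ρ' ^ 2 - ε' ^ 2) * σ' + ε' * (σ' * n')) ^ 2 =
      ρ' ^ 2 - 3 * ε' ^ 2 + 2 * ε' * n' := by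
    -- modulo `hn'` the left side is `(ρ' * σ') ^ 2` times the right side
    linear_combination (ρ' * σ' + 1) * (ρ' ^ 2 - 3 * ε' ^ 2 + 2 * ε' * n') * hinv'
      + σ' ^ 2 * ε' ^ 2 * hn'
  exact congrArg Subtype.val key

theorem quantum_radius_identities {A B : Type*} [Ring A] [Ring B] {φ : A →+* B} {i j k : B}
    (h : IsQuaternionBasis φ i j k) {e x y z r s : A} (he : ∀ a, Commute e a)
    (hxy : x * y - y * x = 2 * e * z) (hyz : y * z - z * y = 2 * e * x)
    (hzx : z * x - x * z = 2 * e * y) (hrx : Commute r x) (hry : Commute r y)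
    (hrz : Commute r z) (hrs : r * s = 1) (hsr : s * r = 1)
    (hr2 : r ^ 2 = x ^ 2 + y ^ 2 + z ^ 2 - e ^ 2) {N X Y Z R : B}
    (hN : N = quatVec φ i j k x y z) (hX : X = φ x + φ e * i) (hY : Y = φ y + φ e * j)
    (hZ : Z = φ z + φ e * k) (hR : R = φ ((r ^ 2 - e ^ 2) * s) + φ e * (φ s * N)) :
    Commute R X ∧ Commute R Y ∧ Commute R Z ∧ R ^ 2 = X ^ 2 + Y ^ 2 + Z ^ 2 - φ e ^ 2 := by
  let u : Aˣ := ⟨r, s, hrs, hsr⟩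
  have hs {a : A} (ha : Commute r a) : Commute s a := Commute.units_inv_left (u := u) ha
  have hc {a : A} (ha : Commute r a) : Commute ((r ^ 2 - e ^ 2) * s) a :=
    (((ha.pow_left 2).sub_left ((he a).pow_left 2))).mul_left (hs ha)
  have hd {a : A} (ha : Commute r a) : Commute (e * s) a := (he a).mul_left (hs ha)
  have hR' : R = φ ((r ^ 2 - e ^ 2) * s) + φ (e * s) * N := by
    rw [hR, map_mul φ e s, mul_assoc]
  have hsum : x ^ 2 + y ^ 2 + z ^ 2 = r ^ 2 + e ^ 2 := by rw [hr2, sub_add_cancel]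
  have hN2 : N ^ 2 = 2 * φ e * N - (φ r ^ 2 + φ e ^ 2) := by
    rw [hN, quatVec_sq h hxy hyz hzx, ← hN, hsum, map_add, map_pow, map_pow]
  have hcommN {t : A} (hx : Commute t x) (hy : Commute t y) (hz : Commute t z) :
      Commute (φ t) N :=
    hN ▸ commute_map_quatVec h hx hy hz
  refine ⟨?_, ?_, ?_, ?_⟩
  · rw [hR', hX, hN]
    exact commute_add_mul_quatVec h he hxy hzx (hc hrx) (hd hrx)
  · rw [hR', hY, hN, ← quatVec_rotate]
    exact commute_add_mul_quatVec h.rotate he hyz hxy (hc hry) (hd hry)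
  · rw [hR', hZ, hN, ← quatVec_rotate, ← quatVec_rotate]
    exact commute_add_mul_quatVec h.rotate.rotate he hzx hyz (hc hrz) (hd hrz)
  calc R ^ 2 = ((φ r ^ 2 - φ e ^ 2) * φ s + φ e * (φ s * N)) ^ 2 := by
        rw [hR, map_mul, map_sub, map_pow, map_pow]
    _ = φ r ^ 2 - 3 * φ e ^ 2 + 2 * φ e * N :=
        quantum_radius_sq_of_commute ((hs (Commute.refl r)).symm.map φ) ((he r).symm.map φ)
          (hcommN hrx hry hrz) ((he s).symm.map φ) (hcommN (hs hrx) (hs hry) (hs hrz))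
          (hcommN (he x) (he y) (he z)) (by rw [← map_mul, hrs, map_one]) hN2
    _ = X ^ 2 + Y ^ 2 + Z ^ 2 - φ e ^ 2 := by
        rw [hX, hY, hZ, sum_sq_add_mul_units h he, ← hN, hsum]
        simp only [map_sub, map_add, map_pow, map_mul, map_ofNat]
        noncomm_ring

open Matrix in
theorem isQuaternionBasis_fin_four {A : Type*} [Ring A] :
    IsQuaternionBasis (scalar (Fin 4) : A →+* Matrix (Fin 4) (Fin 4) A)
      (single 0 1 1 - single 1 0 1 - single 2 3 1 + single 3 2 1)
      (single 0 2 1 + single 1 3 1 - single 2 0 1 - single 3 1 1)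
      (single 0 3 1 - single 1 2 1 + single 2 1 1 - single 3 0 1) := by
  constructor <;> (try intro a; rw [scalar_commute_iff]) <;> ext p q <;>
    fin_cases p <;> fin_cases q <;> simp [mul_apply, single_apply]

open Complex

/-- The matrix `R = ((r² + ħ²)/r)·I + (iħ/r)·N`, encoding the extension of the quantum
partial derivatives to the quantum radius `r`, commutes with `X, Y, Z` (the images of the
generators under the multiplicative map `𝔥̂`) and satisfies `R² = X² + Y² + Z² + ħ²·I`. -/
theorem quantum_radius_matrix_identities
    {A : Type*} [Ring A] [Algebra ℂ A] (hbar : ℂ) (x y z r rinv : A)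
    (hxy : x * y - y * x = (2 * Complex.I * hbar) • z)
    (hyz : y * z - z * y = (2 * Complex.I * hbar) • x)
    (hzx : z * x - x * z = (2 * Complex.I * hbar) • y)
    (hrx : r * x = x * r) (hry : r * y = y * r) (hrz : r * z = z * r)
    (hrinv : r * rinv = 1) (hinvr : rinv * r = 1)
    (hr2 : r ^ 2 = x ^ 2 + y ^ 2 + z ^ 2 + (hbar ^ 2) • (1 : A))
    (Mx My Mz N X Y Z R : Matrix (Fin 4) (Fin 4) A)
    (hMx : Mx = Matrix.single 0 1 (1 : A) - Matrix.single 1 0 (1 : A)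
      - Matrix.single 2 3 (1 : A) + Matrix.single 3 2 (1 : A))
    (hMy : My = Matrix.single 0 2 (1 : A) + Matrix.single 1 3 (1 : A)
      - Matrix.single 2 0 (1 : A) - Matrix.single 3 1 (1 : A))
    (hMz : Mz = Matrix.single 0 3 (1 : A) - Matrix.single 1 2 (1 : A)
      + Matrix.single 2 1 (1 : A) - Matrix.single 3 0 (1 : A))
    (hX : X = x • (1 : Matrix (Fin 4) (Fin 4) A) + (Complex.I * hbar) • Mx)
    (hY : Y = y • (1 : Matrix (Fin 4) (Fin 4) A) + (Complex.I * hbar) • My)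
    (hZ : Z = z • (1 : Matrix (Fin 4) (Fin 4) A) + (Complex.I * hbar) • Mz)
    (hN : N = x • Mx + y • My + z • Mz)
    (hR : R = ((r ^ 2 + (hbar ^ 2) • (1 : A)) * rinv) • (1 : Matrix (Fin 4) (Fin 4) A)
      + (Complex.I * hbar) • (rinv • N)) :
    R * X = X * R ∧ R * Y = Y * R ∧ R * Z = Z * R ∧
      R ^ 2 = X ^ 2 + Y ^ 2 + Z ^ 2 + (hbar ^ 2) • (1 : Matrix (Fin 4) (Fin 4) A) := by
  set φ : A →+* Matrix (Fin 4) (Fin 4) A := Matrix.scalar (Fin 4)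
  set e := algebraMap ℂ A (I * hbar)
  have hsmul (a : A) (M : Matrix (Fin 4) (Fin 4) A) : a • M = φ a * M :=
    Matrix.smul_eq_diagonal_mul M a
  have hcsmul (c : ℂ) (M : Matrix (Fin 4) (Fin 4) A) : c • M = φ (algebraMap ℂ A c) * M := by
    rw [← algebraMap_smul A c M, hsmul]
  have h2e (a : A) : (2 * I * hbar) • a = 2 * e * a := by
    rw [Algebra.smul_def, mul_assoc 2 I, map_mul, map_ofNat]
  have hħ : algebraMap ℂ A (hbar ^ 2) = -e ^ 2 := by
    rw [← map_pow, ← map_neg, mul_pow, I_sq, neg_one_mul, neg_neg]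
  obtain ⟨hRX, hRY, hRZ, hR2⟩ := quantum_radius_identities (N := N) (X := X) (Y := Y) (Z := Z)
    (R := R) (hMx ▸ hMy ▸ hMz ▸ isQuaternionBasis_fin_four) (Algebra.commutes (I * hbar))
    (h2e z ▸ hxy) (h2e x ▸ hyz) (h2e y ▸ hzx) hrx hry hrz hrinv hinvr
    (by rw [hr2, Algebra.smul_def, mul_one, hħ, sub_eq_add_neg])
    (by rw [hN, hsmul, hsmul, hsmul]; rfl)
    (by rw [hX, hsmul, mul_one, hcsmul]) (by rw [hY, hsmul, mul_one, hcsmul])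
    (by rw [hZ, hsmul, mul_one, hcsmul])
    (by rw [hR, hsmul, mul_one, hcsmul, hsmul, Algebra.smul_def, mul_one, hħ, sub_eq_add_neg])
  refine ⟨hRX.eq, hRY.eq, hRZ.eq, ?_⟩
  rw [hR2, hcsmul, mul_one, hħ, map_neg, map_pow, sub_eq_add_neg]
end
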